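/- Let R_m = ℂ[z_0,…,z_{m-1}], Z_0(u) = ∑_{i=0}^{m-1} z_i u^{i+1}, Z_1(u) = ∑_{i=1}^{m-1} z_i u^i, and J_m the ideal generated by the coefficients (Z_0(u)^r)_s for r ≥ 1, s ≥ m+1. For integers r ≥ t > 0 and 0 ≤ s ≤ r, the element z_0^{r-s} (Z_1(u)^{s+1})_{m-t}, taken modulo J_m, belongs to the ℂ-span modulo J_m of the elements z_0^{t-j} (Z_1(u)^{r-t+j+1})_{m-t} for 1 ≤ j ≤ t. -/

import Mathlib

open Polynomial

/-- `Z₀(u) = ∑_{i=0}^{m-1} z_i u^{i+1}` in `R_m[u]`, `R_m = ℂ[z_0,…,z_{m-1}]`. -/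
noncomputable def Zzero (m : ℕ) : Polynomial (MvPolynomial (Fin m) ℂ) :=
  ∑ i : Fin m, Polynomial.C (MvPolynomial.X i) * Polynomial.X ^ ((i : ℕ) + 1)

/-- `Z₁(u) = ∑_{i=1}^{m-1} z_i u^i`. -/
noncomputable def Zone (m : ℕ) : Polynomial (MvPolynomial (Fin m) ℂ) :=
  ∑ i ∈ Finset.univ.filter (fun i : Fin m => 1 ≤ (i : ℕ)),
    Polynomial.C (MvPolynomial.X i) * Polynomial.X ^ (i : ℕ)

/-- The ideal `J_m` generated by the coefficients `(Z₀(u)^r)_s` for `r ≥ 1`, `s ≥ m+1`. -/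
noncomputable def Jm (m : ℕ) : Ideal (MvPolynomial (Fin m) ℂ) :=
  Ideal.span {x | ∃ r s : ℕ, 1 ≤ r ∧ m + 1 ≤ s ∧ x = ((Zzero m) ^ r).coeff s}

/-!
Write `P = z₀ + Z₁`, so that `Z₀ = u P` and `(P^R)_{m-t} = (Z₀^R)_{m-t+R} ∈ J_m` for `R ≥ t + 1`.
With `N = r + 1` and `n = N - t`, send `f = ∑ f_k X^k` (of degree `≤ N`) to the class of the
coefficient of `u^{m-t}` in its homogenization `z₀^N f(Z₁/z₀) = ∑ f_k z₀^{N-k} Z₁^k`. This map kills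
`(1 + X)^R` for `t < R ≤ N`, hence every `(1 + X)^{t+1} g` with `deg g < n`, and (when `t < m`;
otherwise the target is `0`) it kills the constants. The target is the image of `X^K`, `K = s + 1`,
and the spanning elements are the images of `X^k`, `n < k ≤ N`. So it suffices to write
`(1 + X)^{t+1} g = a + c X^K + X^{n+1} h` with `c ≠ 0` and `deg g < n`: take for `g` the truncation
below degree `n` of `(a + c X^K)(1 + X)^{-(t+1)}`, with `a, c` chosen to kill its coefficient of
`X^n`; this is possible because all coefficients of `(1 + X)^{-(t+1)}` are nonzero.
-/

theorem PowerSeries.exists_one_add_X_pow_mul_eq_one {R : Type*} [CommRing R] [CharZero R]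
    (t : ℕ) :
    ∃ F : PowerSeries R, (1 + X) ^ (t + 1) * F = 1 ∧ ∀ i, coeff i F ≠ 0 := by
  refine ⟨rescale (-1) (mk fun i => (Nat.choose (t + i) t : R)), ?_, fun i => ?_⟩
  · have := congrArg (rescale (-1 : R)) (mk_add_choose_mul_one_sub_pow_eq_one (S := R) (d := t))
    simpa [rescale_X, mul_comm, sub_eq_add_neg] using this
  · simp [coeff_rescale, Nat.choose_eq_zero_iff]

theorem Polynomial.exists_one_add_X_pow_mul_eq {R : Type*} [CommRing R] [CharZero R] (t : ℕ)
    {n K : ℕ} (hK : K ≤ n) :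
    ∃ (g h : R[X]) (a c : R), c ≠ 0 ∧ g.degree < n ∧
      (1 + X) ^ (t + 1) * g = C a + C c * X ^ K + X ^ (n + 1) * h := by
  obtain ⟨F, hF, hF_ne⟩ := PowerSeries.exists_one_add_X_pow_mul_eq_one (R := R) t
  set c := PowerSeries.coeff n F
  set a := -PowerSeries.coeff (n - K) F
  set p : R[X] := C a + C c * X ^ K
  set f : PowerSeries R := p * F with hf
  have hf_coeff : PowerSeries.coeff n f = 0 := by
    simp only [hf, p, coe_add, coe_C, coe_mul, coe_pow, coe_X, add_mul, mul_assoc, map_add,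
      PowerSeries.coeff_C_mul, PowerSeries.coeff_X_pow_mul', if_pos hK, a, c]
    ring
  have hpf : (((1 + X) ^ (t + 1) : R[X]) : PowerSeries R) * f = p := by
    rw [hf, mul_left_comm]
    simpa using congrArg ((p : PowerSeries R) * ·) hF
  have htrunc : PowerSeries.trunc n f = PowerSeries.trunc (n + 1) f := by
    rw [PowerSeries.trunc_succ, hf_coeff, map_zero, add_zero]
  have hdvd : X ^ (n + 1) ∣ (1 + X) ^ (t + 1) * PowerSeries.trunc n f - p := by
    refine X_pow_dvd_iff.2 fun d hd => ?_
    rw [coeff_sub, sub_eq_zero, htrunc]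
    calc ((1 + X) ^ (t + 1) * PowerSeries.trunc (n + 1) f).coeff d
        = (PowerSeries.trunc (n + 1)
            (((1 + X) ^ (t + 1) * PowerSeries.trunc (n + 1) f : R[X]) :
              PowerSeries R)).coeff d := by
          rw [PowerSeries.coeff_trunc, if_pos hd, coeff_coe]
      _ = (PowerSeries.trunc (n + 1)
            ((((1 + X) ^ (t + 1) : R[X]) : PowerSeries R) * f)).coeff d := by
          rw [coe_mul, PowerSeries.trunc_mul_trunc]
      _ = p.coeff d := by
          rw [hpf, PowerSeries.coeff_trunc, if_pos hd, coeff_coe]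
  obtain ⟨h, hh⟩ := hdvd
  exact ⟨_, h, a, c, hF_ne n, PowerSeries.degree_trunc_lt f n, by rw [← hh]; ring⟩

theorem Polynomial.coeff_add_C_pow {A : Type*} [CommSemiring A] (q : A[X]) (a : A) (R d : ℕ) :
    ((q + C a) ^ R).coeff d =
      ∑ k ∈ Finset.range (R + 1), (q ^ k).coeff d * a ^ (R - k) * R.choose k := by
  rw [add_pow, finsetSum_coeff]
  refine Finset.sum_congr rfl fun k _ => ?_
  rw [← C_pow, ← map_natCast C, coeff_mul_C, coeff_mul_C]

theorem Zzero_eq_X_mul (m : ℕ) (hm : 0 < m) :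
    Zzero m = X * (Zone m + C (MvPolynomial.X ⟨0, hm⟩)) := by
  have hfilter : Finset.univ.filter (fun i : Fin m => ¬ 1 ≤ (i : ℕ)) = {⟨0, hm⟩} := by
    ext i
    simp [Fin.ext_iff]
  rw [Zzero, Zone,
    ← Finset.sum_filter_add_sum_filter_not Finset.univ (fun i : Fin m => 1 ≤ (i : ℕ)), hfilter,
    Finset.sum_singleton, mul_add, Finset.mul_sum]
  exact congrArg₂ (· + ·) (Finset.sum_congr rfl fun i _ => by ring)
    (by rw [Fin.val_mk, zero_add, pow_one, mul_comm])

theorem coeff_Zone_pow_zero (m : ℕ) {k : ℕ} (hk : k ≠ 0) : ((Zone m) ^ k).coeff 0 = 0 := by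
  simp only [coeff_zero_eq_eval_zero, eval_pow, Zone, eval_finsetSum, eval_mul, eval_C, eval_X]
  rw [Finset.sum_eq_zero fun i hi => by rw [zero_pow (by simp at hi; omega), mul_zero], zero_pow hk]

theorem coeff_Zzero_pow (m : ℕ) (hm : 0 < m) (R d : ℕ) :
    ((Zzero m) ^ R).coeff (d + R) = ∑ k ∈ Finset.range (R + 1),
      ((Zone m) ^ k).coeff d * MvPolynomial.X ⟨0, hm⟩ ^ (R - k) *
        (R.choose k : MvPolynomial (Fin m) ℂ) := by
  rw [Zzero_eq_X_mul m hm, mul_pow, coeff_X_pow_mul, coeff_add_C_pow]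

noncomputable def zoneTerm (m : ℕ) (hm : 0 < m) (t N k : ℕ) :
    MvPolynomial (Fin m) ℂ ⧸ Jm m :=
  Ideal.Quotient.mk (Jm m) (MvPolynomial.X ⟨0, hm⟩ ^ (N - k) * ((Zone m) ^ k).coeff (m - t))

noncomputable def zoneEval (m : ℕ) (hm : 0 < m) (t N : ℕ) :
    ℂ[X] →ₗ[ℂ] MvPolynomial (Fin m) ℂ ⧸ Jm m :=
  ∑ k ∈ Finset.range (N + 1), (lcoeff ℂ k).smulRight (zoneTerm m hm t N k)

section zoneEval

variable {m : ℕ} (hm : 0 < m) {t N : ℕ}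

theorem zoneEval_apply (f : ℂ[X]) :
    zoneEval m hm t N f = ∑ k ∈ Finset.range (N + 1), f.coeff k • zoneTerm m hm t N k := by
  simp [zoneEval]

theorem zoneTerm_zero (htm : t < m) : zoneTerm m hm t N 0 = 0 := by
  simp [zoneTerm, coeff_one, Nat.sub_ne_zero_of_lt htm]

theorem zoneEval_C (htm : t < m) (a : ℂ) : zoneEval m hm t N (C a) = 0 := by
  simp [zoneEval_apply, coeff_C, zoneTerm_zero hm htm]

theorem zoneEval_C_mul_X_pow {k : ℕ} (hk : k ≤ N) (c : ℂ) :
    zoneEval m hm t N (C c * X ^ k) = c • zoneTerm m hm t N k := by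
  simp [zoneEval_apply, Nat.lt_succ_of_le hk]

theorem zoneEval_one_add_X_pow {R : ℕ} (hR : t + 1 ≤ R) (hRN : R ≤ N) :
    zoneEval m hm t N ((1 + X) ^ R) = 0 := by
  have hsum : ∑ k ∈ Finset.range (N + 1), (R.choose k : ℂ) •
        (MvPolynomial.X ⟨0, hm⟩ ^ (N - k) * ((Zone m) ^ k).coeff (m - t)) =
      MvPolynomial.X ⟨0, hm⟩ ^ (N - R) * ((Zzero m) ^ R).coeff (m - t + R) := by
    rw [coeff_Zzero_pow m hm, Finset.mul_sum, ← Finset.sum_subset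
      (Finset.range_subset_range.2 (Nat.succ_le_succ hRN)) fun k _ hk => by
        rw [Nat.choose_eq_zero_of_lt (by simpa using hk), Nat.cast_zero, zero_smul]]
    refine Finset.sum_congr rfl fun k hk => ?_
    rw [Nat.cast_smul_eq_nsmul, nsmul_eq_mul,
      show N - k = (N - R) + (R - k) by simp at hk; omega, pow_add]
    ring
  rw [zoneEval_apply]
  simp only [coeff_one_add_X_pow, zoneTerm, ← Ideal.Quotient.mkₐ_eq_mk ℂ, ← map_smul,
    ← map_sum]
  rw [hsum, Ideal.Quotient.mkₐ_eq_mk, Ideal.Quotient.eq_zero_iff_mem]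
  exact Ideal.mul_mem_left _ _ (Ideal.subset_span ⟨R, m - t + R, by omega, by omega, rfl⟩)

theorem zoneEval_one_add_X_pow_mul {n : ℕ} {g : ℂ[X]} (hg : g.degree < n) :
    zoneEval m hm t (n + t) ((1 + X) ^ (t + 1) * g) = 0 := by
  conv_lhs => rw [← sum_taylor_eq g (-1)]
  rw [Polynomial.sum_def, Finset.mul_sum, map_sum]
  refine Finset.sum_eq_zero fun j hj => ?_
  have hjn : j < n := by
    have := (le_degree_of_mem_supp j hj).trans_lt ((degree_taylor g _).symm ▸ hg)
    exact_mod_cast this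
  rw [map_neg, map_one, sub_neg_eq_add, add_comm X 1, mul_left_comm, ← pow_add, ← smul_eq_C_mul,
    map_smul, zoneEval_one_add_X_pow hm le_self_add (by omega), smul_zero]

theorem zoneEval_mem_span_of_X_pow_dvd {n : ℕ} {q : ℂ[X]} (hq : X ^ (n + 1) ∣ q) :
    zoneEval m hm t (n + t) q ∈
      Submodule.span ℂ (zoneTerm m hm t (n + t) '' Set.Ioc n (n + t)) := by
  rw [zoneEval_apply]
  refine Submodule.sum_mem _ fun k hk => ?_
  rcases le_or_gt k n with hkn | hnk
  · rw [X_pow_dvd_iff.1 hq k (Nat.lt_succ_of_le hkn), zero_smul]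
    exact Submodule.zero_mem _
  · exact Submodule.smul_mem _ _ (Submodule.subset_span
      ⟨k, ⟨hnk, Nat.lt_succ_iff.1 (Finset.mem_range.1 hk)⟩, rfl⟩)

theorem zoneTerm_mem_span (htm : t < m) {n K : ℕ} (hK : K ≤ n + t) :
    zoneTerm m hm t (n + t) K ∈
      Submodule.span ℂ (zoneTerm m hm t (n + t) '' Set.Ioc n (n + t)) := by
  rcases le_or_gt K n with hKn | hnK
  · obtain ⟨g, h, a, c, hc, hg, hgh⟩ := exists_one_add_X_pow_mul_eq (R := ℂ) t hKn
    have hrel := zoneEval_one_add_X_pow_mul hm (t := t) hg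
    rw [hgh, map_add, map_add, zoneEval_C hm htm, zero_add, zoneEval_C_mul_X_pow hm hK] at hrel
    rw [← Submodule.smul_mem_iff _ hc, eq_neg_of_add_eq_zero_left hrel]
    exact neg_mem (zoneEval_mem_span_of_X_pow_dvd hm (dvd_mul_right _ _))
  · exact Submodule.subset_span ⟨K, ⟨hnK, hK⟩, rfl⟩

end zoneEval

theorem stmt_15_general (m : ℕ) (hm : 0 < m) (r t s : ℕ) (htr : t ≤ r) (hsr : s ≤ r) :
    Ideal.Quotient.mk (Jm m)
        (MvPolynomial.X (⟨0, hm⟩ : Fin m) ^ (r - s) * ((Zone m) ^ (s + 1)).coeff (m - t)) ∈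
      Submodule.span ℂ
        {x : MvPolynomial (Fin m) ℂ ⧸ Jm m |
          ∃ j : ℕ, 1 ≤ j ∧ j ≤ t ∧
            x = Ideal.Quotient.mk (Jm m)
              (MvPolynomial.X (⟨0, hm⟩ : Fin m) ^ (t - j) *
                ((Zone m) ^ (r - t + j + 1)).coeff (m - t))} := by
  rcases le_or_gt m t with hmt | htm
  · rw [Nat.sub_eq_zero_of_le hmt, coeff_Zone_pow_zero m s.succ_ne_zero, mul_zero, map_zero]
    exact Submodule.zero_mem _
  · have hN : r + 1 - t + t = r + 1 := Nat.sub_add_cancel (by omega)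
    have key := zoneTerm_mem_span hm htm (n := r + 1 - t) (K := s + 1) (by omega)
    rw [hN] at key
    refine Submodule.span_mono ?_ (by simpa [zoneTerm] using key)
    rintro _ ⟨k, ⟨hk₁, hk₂⟩, rfl⟩
    refine ⟨k - (r + 1 - t), by omega, by omega, ?_⟩
    rw [zoneTerm, show t - (k - (r + 1 - t)) = r + 1 - k by omega,
      show r - t + (k - (r + 1 - t)) + 1 = k by omega]

/-- For `r ≥ t > 0` and `0 ≤ s ≤ r`, the image of
`z₀^{r-s} (Z₁(u)^{s+1})_{m-t}` in `R_m/J_m` lies in the ℂ-span of the images of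
the elements `z₀^{t-j} (Z₁(u)^{r-t+j+1})_{m-t}` for `1 ≤ j ≤ t`. -/
theorem stmt_15 (m : ℕ) (hm : 0 < m) (r t s : ℕ) (ht : 0 < t) (htr : t ≤ r) (hsr : s ≤ r) :
    Ideal.Quotient.mk (Jm m)
        (MvPolynomial.X (⟨0, hm⟩ : Fin m) ^ (r - s) * ((Zone m) ^ (s + 1)).coeff (m - t)) ∈
      Submodule.span ℂ
        {x : MvPolynomial (Fin m) ℂ ⧸ Jm m |
          ∃ j : ℕ, 1 ≤ j ∧ j ≤ t ∧
            x = Ideal.Quotient.mk (Jm m)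
              (MvPolynomial.X (⟨0, hm⟩ : Fin m) ^ (t - j) *
                ((Zone m) ^ (r - t + j + 1)).coeff (m - t))} :=
  stmt_15_general m hm r t s htr hsr
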